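/- Let Σ be a normal tropical fan of pure dimension d in ℝ^n such that the graph with vertex set Σ_d and an edge between σ and σ' whenever some τ ∈ Σ_{d−1} satisfies τ ⊂ σ and τ ⊂ σ' is connected. Then every Minkowski weight of dimension d on Σ is constant; equivalently, MW_d(Σ) is the free abelian group generated by the weight [Σ] constantly equal to 1. -/

import Mathlib

/- Formalization of polyhedral-geometry notions: rational fans in ℝⁿ with lattice ℤⁿ,
tropical fans (balancing condition), conewise integral linear functions, Minkowski
weights, etc., following the paper "Homology of tropical fans" by Amini–Piquerez. -/

open Classical MvPolynomial
open scoped TensorProduct DirectSum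

noncomputable section

/-- The ambient space `ℝ^n`. -/
abbrev V (n : ℕ) : Type := Fin n → ℝ

/-- The inclusion of the lattice `ℤ^n` into `ℝ^n`. -/
def intVec {n : ℕ} (v : Fin n → ℤ) : V n := fun i => (v i : ℝ)

lemma intVec_zero {n : ℕ} : intVec (0 : Fin n → ℤ) = 0 := by
  funext i; simp [intVec]

lemma intVec_add {n : ℕ} (a b : Fin n → ℤ) : intVec (a + b) = intVec a + intVec b := by
  funext i; simp [intVec]

lemma intVec_neg {n : ℕ} (a : Fin n → ℤ) : intVec (-a) = -intVec a := by
  funext i; simp [intVec]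

/-- The pairing between `M = Hom(ℤ^n, ℤ)` (an element of which is represented by its
coefficient vector) and the lattice `ℤ^n`. -/
def pairZ {n : ℕ} (ℓ v : Fin n → ℤ) : ℤ := ∑ i, ℓ i * v i

/-- The pairing between an element of `M` and a vector of `ℝ^n`, i.e. the linear form
on `ℝ^n` defined by an element of `M`. -/
def pairR {n : ℕ} (ℓ : Fin n → ℤ) (x : V n) : ℝ := ∑ i, (ℓ i : ℝ) * x i

/-- `σ` is a rational cone: the set of nonnegative combinations of a finite set of
integer vectors. -/
def IsRationalCone {n : ℕ} (σ : Set (V n)) : Prop :=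
  ∃ S : Finset (Fin n → ℤ),
    σ = {x | ∃ lam : (Fin n → ℤ) → ℝ, (∀ v, 0 ≤ lam v) ∧ x = ∑ v ∈ S, lam v • intVec v}

/-- A cone is strongly convex if `σ ∩ (-σ) = {0}`. -/
def StronglyConvex {n : ℕ} (σ : Set (V n)) : Prop := σ ∩ (-σ) = {0}

/-- `τ` is a face of the cone `σ`: `τ = σ ∩ ker ℓ` for a linear form `ℓ` nonnegative
on `σ`. -/
def IsFaceOf {n : ℕ} (τ σ : Set (V n)) : Prop :=
  ∃ ℓ : (V n) →ₗ[ℝ] ℝ, (∀ x ∈ σ, 0 ≤ ℓ x) ∧ τ = σ ∩ {x | ℓ x = 0}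

/-- A (rational) fan in `ℝ^n`: a finite nonempty collection of strongly convex rational
cones, closed under taking faces, such that the intersection of any two cones is a face
of each of them. -/
structure IsFan {n : ℕ} (F : Finset (Set (V n))) : Prop where
  nonempty : F.Nonempty
  rat : ∀ σ ∈ F, IsRationalCone σ
  convex : ∀ σ ∈ F, StronglyConvex σ
  faces_mem : ∀ σ ∈ F, ∀ τ : Set (V n), IsFaceOf τ σ → τ ∈ F
  inter_face_left : ∀ σ ∈ F, ∀ σ' ∈ F, IsFaceOf (σ ∩ σ') σ
  inter_face_right : ∀ σ ∈ F, ∀ σ' ∈ F, IsFaceOf (σ ∩ σ') σ'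

/-- The dimension of a cone: the dimension of its real linear span. -/
def dimC {n : ℕ} (σ : Set (V n)) : ℕ := Module.finrank ℝ ↥(Submodule.span ℝ σ)

/-- `v ∈ N_σ := ℤ^n ∩ span_ℝ(σ)`. -/
def memLat {n : ℕ} (σ : Set (V n)) (v : Fin n → ℤ) : Prop :=
  intVec v ∈ Submodule.span ℝ σ

/-- `v` is a normal vector `n_{σ/τ}` for the codimension-one face `τ` of `σ`:
`v ∈ N_σ ∩ (σ + span_ℝ(τ))` and `N_τ + ℤ·v = N_σ`. -/
def IsNormalVector {n : ℕ} (σ τ : Set (V n)) (v : Fin n → ℤ) : Prop :=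
  memLat σ v ∧ (∃ y ∈ σ, ∃ z ∈ Submodule.span ℝ τ, intVec v = y + z) ∧
  ∀ w : Fin n → ℤ, memLat σ w ↔ ∃ u : Fin n → ℤ, ∃ k : ℤ, memLat τ u ∧ w = u + k • v

/-- The cones of `F` of dimension `d` containing `τ`. -/
def facets {n : ℕ} (F : Finset (Set (V n))) (d : ℕ) (τ : Set (V n)) :
    Finset (Set (V n)) :=
  F.filter fun σ => dimC σ = d ∧ τ ⊆ σ

/-- `Σ_k`: the `k`-dimensional cones of the fan. -/
def conesK {n : ℕ} (F : Finset (Set (V n))) (k : ℕ) : Finset (Set (V n)) :=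
  F.filter fun σ => dimC σ = k

/-- A tropical fan of pure dimension `d`: a rational fan, pure of dimension `d`
(every maximal cone has dimension `d`), satisfying the balancing condition: for every
`τ ∈ Σ_{d-1}` and any choice of normal vectors, `∑_{σ ⊃ τ} n_{σ/τ} ∈ N_τ`. -/
def IsTropicalFan {n : ℕ} (F : Finset (Set (V n))) (d : ℕ) : Prop :=
  IsFan F ∧ (∀ σ ∈ F, (∀ η ∈ F, σ ⊆ η → σ = η) → dimC σ = d) ∧
  ∀ τ ∈ F, dimC τ = d - 1 →
    ∀ v : Set (V n) → Fin n → ℤ,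
      (∀ σ ∈ facets F d τ, IsNormalVector σ τ (v σ)) →
      memLat τ (∑ σ ∈ facets F d τ, v σ)

/-- `f` is conewise integral linear on the fan `F`: on each cone it agrees with an
element of `M`. -/
def ConewiseLinear {n : ℕ} (F : Finset (Set (V n))) (f : V n → ℝ) : Prop :=
  ∀ σ ∈ F, ∃ ℓ : Fin n → ℤ, ∀ x ∈ σ, f x = pairR ℓ x

/-- A Minkowski weight of dimension `k` on the fan `F`: an integer weight on `Σ_k`
satisfying the balancing condition. -/
def IsMinkowskiWeight {n : ℕ} (F : Finset (Set (V n))) (k : ℕ) (w : Set (V n) → ℤ) :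
    Prop :=
  ∀ τ ∈ F, dimC τ = k - 1 →
    ∀ u : Set (V n) → Fin n → ℤ,
      (∀ σ ∈ facets F k τ, IsNormalVector σ τ (u σ)) →
      memLat τ (∑ σ ∈ facets F k τ, w σ • u σ)

/-- A tropical fan of dimension `d` is normal (smooth in codimension one) if, for every
`τ ∈ Σ_{d-1}`, any choice of normal vectors and any real coefficients `a_σ` with
`∑_{σ ⊃ τ} a_σ · n_{σ/τ} ∈ span_ℝ(τ)`, all the `a_σ` are equal. -/
def IsNormalTropicalFan {n : ℕ} (F : Finset (Set (V n))) (d : ℕ) : Prop :=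
  ∀ τ ∈ F, dimC τ = d - 1 →
    ∀ v : Set (V n) → Fin n → ℤ,
      (∀ σ ∈ facets F d τ, IsNormalVector σ τ (v σ)) →
      ∀ a : Set (V n) → ℝ,
        (∑ σ ∈ facets F d τ, a σ • intVec (v σ)) ∈ Submodule.span ℝ τ →
        ∀ σ ∈ facets F d τ, ∀ σ' ∈ facets F d τ, a σ = a σ'

/-!
Around a cone `τ ∈ Σ_{d-1}`, the balancing condition for `w` says that
`∑_{σ ⊃ τ} w(σ) n_{σ/τ}` lies in `span τ`, so normality forces `w` to take the same
value on all facets containing `τ`; connectivity of the facet graph spreads this value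
everywhere. For the balancing and normality conditions to say anything, normal vectors
must exist: an integral form `c` with `span σ ∩ ker c = span τ` embeds `N_σ / N_τ` into
`ℤ`, and a lift of a generator of the image is a normal vector.
-/

open Matrix Submodule

section IntegerVectors

variable {n : ℕ}

lemma intVec_zsmul (k : ℤ) (v : Fin n → ℤ) : intVec (k • v) = (k : ℝ) • intVec v := by
  funext i; simp [intVec]

lemma intVec_sum {ι : Type*} (s : Finset ι) (f : ι → Fin n → ℤ) :
    intVec (∑ i ∈ s, f i) = ∑ i ∈ s, intVec (f i) := by
  funext j; simp [intVec]

/-- The real linear form on `ℝ^n` defined by an element `c` of `M = Hom(ℤ^n, ℤ)`. -/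
def realForm (c : Fin n → ℤ) : Module.Dual ℝ (V n) :=
  dotProductEquiv ℝ (Fin n) (intVec c)

lemma realForm_intVec (c v : Fin n → ℤ) :
    realForm c (intVec v) = ((c ⬝ᵥ v : ℤ) : ℝ) := by
  simp [realForm, intVec, dotProduct]

/-- `N_σ` as a subgroup of `ℤ^n`. -/
def lattice (σ : Set (V n)) : AddSubgroup (Fin n → ℤ) where
  carrier := {v | memLat σ v}
  zero_mem' := by simp [memLat, intVec_zero]
  add_mem' {a b} ha hb := by
    simpa only [Set.mem_ofPred_eq, memLat, intVec_add] using add_mem ha hb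
  neg_mem' {a} ha := by
    simpa only [Set.mem_ofPred_eq, memLat, intVec_neg] using neg_mem ha

lemma mem_lattice {σ : Set (V n)} {v : Fin n → ℤ} : v ∈ lattice σ ↔ memLat σ v := Iff.rfl

/-- A real linear relation among integer vectors descends to `ℚ`, where a rational form
separating `x` can be scaled to an integral one. -/
lemma exists_dotProduct_pos_of_notMem_span {T : Set (Fin n → ℤ)} {x : Fin n → ℤ}
    (hx : intVec x ∉ span ℝ (intVec '' T)) :
    ∃ c : Fin n → ℤ, (∀ t ∈ T, c ⬝ᵥ t = 0) ∧ 0 < c ⬝ᵥ x := by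
  let toRat : (Fin n → ℤ) → Fin n → ℚ := fun v i => v i
  let toReal : (Fin n → ℚ) →ₗ[ℚ] V n := (Algebra.linearMap ℚ ℝ).compLeft (Fin n)
  have toReal_toRat (v : Fin n → ℤ) : toReal (toRat v) = intVec v := by
    funext i; simp [toReal, toRat, intVec]
  have hxℚ : toRat x ∉ span ℚ (toRat '' T) := by
    intro h
    have h' := apply_mem_span_image_of_mem_span toReal h
    rw [← Set.image_comp, toReal_toRat] at h'
    exact hx <| span_le_restrictScalars ℚ ℝ _ <| by
      simpa [Function.comp_def, toReal_toRat] using h'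
  obtain ⟨f, hfx, hfT⟩ := exists_dual_map_eq_bot_of_notMem hxℚ inferInstance
  obtain ⟨b, hb⟩ := IsLocalization.exist_integer_multiples_of_finite (nonZeroDivisors ℤ)
    ((dotProductEquiv ℚ (Fin n)).symm f)
  choose c hc using hb
  have hcf (v : Fin n → ℤ) : ((c ⬝ᵥ v : ℤ) : ℚ) = (b : ℤ) * f (toRat v) := by
    conv_rhs => rw [← (dotProductEquiv ℚ (Fin n)).apply_symm_apply f]
    simp only [dotProductEquiv_apply_apply, dotProduct, Int.cast_sum, Int.cast_mul,
      Finset.mul_sum]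
    refine Finset.sum_congr rfl fun i _ => ?_
    simp only [algebraMap_int_eq, eq_intCast] at hc
    rw [hc i, zsmul_eq_mul, mul_assoc]
  have hb0 : ((b : ℤ) : ℚ) ≠ 0 := by exact_mod_cast nonZeroDivisors.coe_ne_zero b
  have hcT (t) (ht : t ∈ T) : c ⬝ᵥ t = 0 := by
    have : f (toRat t) = 0 := by
      rw [← Submodule.mem_bot ℚ, ← hfT]
      exact mem_map_of_mem (subset_span ⟨t, ht, rfl⟩)
    have h := hcf t
    rw [this, mul_zero] at h
    exact_mod_cast h
  have hcx : c ⬝ᵥ x ≠ 0 := by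
    intro h
    have := hcf x
    rw [h, Int.cast_zero, eq_comm, mul_eq_zero] at this
    exact this.elim hb0 hfx
  rcases hcx.lt_or_gt with hneg | hpos
  · exact ⟨-c, fun t ht => by rw [neg_dotProduct, hcT t ht, neg_zero],
      by rw [neg_dotProduct]; omega⟩
  · exact ⟨c, hcT, hpos⟩

end IntegerVectors

section RationalCones

variable {n : ℕ} {σ : Set (V n)}

lemma IsRationalCone.zero_mem (hσ : IsRationalCone σ) : (0 : V n) ∈ σ := by
  obtain ⟨S, rfl⟩ := hσ
  exact ⟨0, fun _ => le_rfl, by simp⟩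

lemma IsRationalCone.smul_mem (hσ : IsRationalCone σ) {r : ℝ} (hr : 0 ≤ r) {x : V n}
    (hx : x ∈ σ) : r • x ∈ σ := by
  obtain ⟨S, rfl⟩ := hσ
  obtain ⟨lam, hlam, rfl⟩ := hx
  exact ⟨r • lam, fun v => mul_nonneg hr (hlam v), by simp [Finset.smul_sum, smul_smul]⟩

lemma IsRationalCone.exists_finset_span_eq (hσ : IsRationalCone σ) :
    ∃ S : Finset (Fin n → ℤ), (∀ v ∈ S, intVec v ∈ σ) ∧
      span ℝ σ = span ℝ (intVec '' S) := by
  obtain ⟨S, rfl⟩ := hσ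
  have hgen (v) (hv : v ∈ S) : intVec v ∈ {x | ∃ lam : (Fin n → ℤ) → ℝ,
      (∀ v, 0 ≤ lam v) ∧ x = ∑ v ∈ S, lam v • intVec v} :=
    ⟨Pi.single v 1, fun u => by by_cases h : u = v <;> simp [h],
      by rw [Finset.sum_eq_single_of_mem v hv fun u _ hu => by simp [hu]]; simp⟩
  refine ⟨S, hgen, le_antisymm ?_ (span_le.2 ?_)⟩
  · rw [span_le]
    rintro _ ⟨lam, -, rfl⟩
    exact sum_mem fun v hv => Submodule.smul_mem _ _ (subset_span ⟨v, hv, rfl⟩)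
  · rintro _ ⟨v, hv, rfl⟩
    exact subset_span (hgen v hv)

lemma IsRationalCone.eq_zero_of_dimC_eq_zero (hσ : IsRationalCone σ) (h : dimC σ = 0) :
    σ = {0} := by
  have hspan : span ℝ σ = ⊥ := finrank_eq_zero.1 h
  refine Set.eq_singleton_iff_unique_mem.2 ⟨hσ.zero_mem, fun x hx => ?_⟩
  simpa [hspan] using subset_span (R := ℝ) hx

end RationalCones

lemma Submodule.inf_ker_eq_of_finrank_eq_succ {K W : Type*} [Field K] [AddCommGroup W]
    [Module K W] {P Q : Submodule K W} [FiniteDimensional K Q] (hPQ : P ≤ Q)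
    (hrank : Module.finrank K Q = Module.finrank K P + 1) {ℓ : Module.Dual K W}
    (hP : P ≤ LinearMap.ker ℓ) {x : W} (hxQ : x ∈ Q) (hx : ℓ x ≠ 0) :
    Q ⊓ LinearMap.ker ℓ = P := by
  have hlt : Q ⊓ LinearMap.ker ℓ < Q :=
    inf_le_left.lt_of_ne fun h => hx (h.ge hxQ).2
  have := finrank_lt_finrank_of_lt hlt
  exact (eq_of_le_of_finrank_le (le_inf hPQ hP) (by omega)).symm

section NormalVectors

variable {n : ℕ} {σ τ : Set (V n)}

/-- If `span σ ∩ ker c = span τ` then `c` maps `N_σ / N_τ` injectively into `ℤ`, so a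
preimage of a generator of the image is a normal vector, on the side of `σ` where `c > 0`. -/
lemma exists_isNormalVector_of_inf_ker_eq (hσ : IsRationalCone σ) {c x : Fin n → ℤ}
    (hker : span ℝ σ ⊓ LinearMap.ker (realForm c) = span ℝ τ) (hx : intVec x ∈ σ)
    (hcx : 0 < c ⬝ᵥ x) : ∃ g, IsNormalVector σ τ g := by
  have memLat_iff (v : Fin n → ℤ) : memLat τ v ↔ memLat σ v ∧ c ⬝ᵥ v = 0 := by
    rw [memLat, memLat, ← hker, mem_inf, LinearMap.mem_ker, realForm_intVec,
      Int.cast_eq_zero]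
  obtain ⟨m, hm⟩ := Int.subgroup_cyclic
    ((lattice σ).map (dotProductEquiv ℤ (Fin n) c).toAddMonoidHom)
  rw [← AddSubgroup.zmultiples_eq_closure, ← Int.zmultiples_natAbs, Int.natCast_natAbs] at hm
  have hdvd (v : Fin n → ℤ) (hv : memLat σ v) : |m| ∣ c ⬝ᵥ v := by
    rw [← Int.mem_zmultiples_iff, ← hm]
    exact AddSubgroup.mem_map_of_mem _ (mem_lattice.2 hv)
  obtain ⟨g, hg, hgm⟩ := AddSubgroup.mem_map.1 (hm ▸ AddSubgroup.mem_zmultiples |m|)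
  change c ⬝ᵥ g = |m| at hgm
  set r : ℝ := |m| / (c ⬝ᵥ x : ℤ)
  refine ⟨g, mem_lattice.1 hg, ⟨r • intVec x, hσ.smul_mem (by positivity) hx,
    intVec g - r • intVec x, ?_, by abel⟩, fun w => ⟨fun hw => ?_, ?_⟩⟩
  · rw [← hker]
    refine ⟨sub_mem (mem_lattice.1 hg) (Submodule.smul_mem _ _ (subset_span hx)), ?_⟩
    have : ((c ⬝ᵥ x : ℤ) : ℝ) ≠ 0 := by exact_mod_cast hcx.ne'
    simp [r, realForm_intVec, hgm, this]
  · obtain ⟨j, hj⟩ := hdvd w hw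
    have hwj : w - j • g ∈ lattice σ := sub_mem (mem_lattice.2 hw) (zsmul_mem hg j)
    refine ⟨w - j • g, j, (memLat_iff _).2 ⟨hwj, ?_⟩, by abel⟩
    rw [dotProduct_sub, dotProduct_smul, hgm, hj, smul_eq_mul]
    ring
  · rintro ⟨u, k, hu, rfl⟩
    exact add_mem (mem_lattice.2 ((memLat_iff u).1 hu).1) (zsmul_mem hg k)

lemma exists_isNormalVector (hσ : IsRationalCone σ) (hτ : IsRationalCone τ) (hτσ : τ ⊆ σ)
    (hdim : dimC σ = dimC τ + 1) : ∃ g, IsNormalVector σ τ g := by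
  obtain ⟨S, hSσ, hσS⟩ := hσ.exists_finset_span_eq
  obtain ⟨T, -, hτT⟩ := hτ.exists_finset_span_eq
  obtain ⟨x, hxS, hxτ⟩ : ∃ x ∈ S, intVec x ∉ span ℝ τ := by
    by_contra! h
    have : span ℝ σ ≤ span ℝ τ :=
      hσS ▸ span_le.2 (by rintro _ ⟨v, hv, rfl⟩; exact h v hv)
    have := finrank_mono this
    unfold dimC at hdim
    omega
  obtain ⟨c, hcT, hcx⟩ := exists_dotProduct_pos_of_notMem_span (hτT ▸ hxτ)
  have hτc : span ℝ τ ≤ LinearMap.ker (realForm c) := hτT ▸ span_le.2 (by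
    rintro _ ⟨t, ht, rfl⟩
    simp [realForm_intVec, hcT t ht])
  have hker := inf_ker_eq_of_finrank_eq_succ (span_mono hτσ) hdim hτc
    (subset_span (hSσ x hxS)) (by rw [realForm_intVec]; exact_mod_cast hcx.ne')
  exact exists_isNormalVector_of_inf_ker_eq hσ hker (hSσ x hxS) hcx

end NormalVectors

section MinkowskiWeights

variable {n d : ℕ} {F : Finset (Set (V n))} {w : Set (V n) → ℤ}

lemma IsMinkowskiWeight.eq_of_mem_facets (hw : IsMinkowskiWeight F d w)
    (hrat : ∀ σ ∈ F, IsRationalCone σ) (hnormal : IsNormalTropicalFan F d) (hd : 1 ≤ d)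
    {τ : Set (V n)} (hτ : τ ∈ conesK F (d - 1)) {a b : Set (V n)} (ha : a ∈ facets F d τ)
    (hb : b ∈ facets F d τ) : w a = w b := by
  simp only [conesK, Finset.mem_filter] at hτ
  have hnv (σ) (hσ : σ ∈ facets F d τ) : ∃ g, IsNormalVector σ τ g := by
    simp only [facets, Finset.mem_filter] at hσ
    exact exists_isNormalVector (hrat σ hσ.1) (hrat τ hτ.1) hσ.2.2 (by omega)
  choose! v hv using hnv
  have hbal := hw τ hτ.1 hτ.2 v hv
  rw [memLat, intVec_sum] at hbal
  simp only [intVec_zsmul] at hbal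
  exact_mod_cast hnormal τ hτ.1 hτ.2 v hv (fun σ => w σ) hbal a ha b hb

lemma IsMinkowskiWeight.eq_of_adjacent (hw : IsMinkowskiWeight F d w)
    (hrat : ∀ σ ∈ F, IsRationalCone σ) (hnormal : IsNormalTropicalFan F d)
    {a b : Set (V n)} (ha : a ∈ conesK F d) (hb : b ∈ conesK F d)
    (hab : ∃ τ ∈ conesK F (d - 1), τ ⊆ a ∧ τ ⊆ b) : w a = w b := by
  obtain ⟨τ, hτ, hτa, hτb⟩ := hab
  simp only [conesK, Finset.mem_filter] at ha hb
  rcases Nat.eq_zero_or_pos d with rfl | hd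
  · rw [(hrat a ha.1).eq_zero_of_dimC_eq_zero ha.2,
      (hrat b hb.1).eq_zero_of_dimC_eq_zero hb.2]
  · exact hw.eq_of_mem_facets hrat hnormal hd hτ (Finset.mem_filter.2 ⟨ha.1, ha.2, hτa⟩)
      (Finset.mem_filter.2 ⟨hb.1, hb.2, hτb⟩)

end MinkowskiWeights

/-- Let `Σ` be a normal tropical fan of pure dimension `d` whose
connectivity-through-codimension-one graph on the facets is connected. Then every
Minkowski weight of dimension `d` on `Σ` is constant. -/
theorem top_minkowski_weight_constant {n d : ℕ}
    (F : Finset (Set (V n))) (hF : IsTropicalFan F d)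
    (hnormal : IsNormalTropicalFan F d)
    (hconn : ∀ σ ∈ conesK F d, ∀ σ' ∈ conesK F d,
      Relation.ReflTransGen (fun a b =>
        a ∈ conesK F d ∧ b ∈ conesK F d ∧
        ∃ τ ∈ conesK F (d - 1), τ ⊆ a ∧ τ ⊆ b) σ σ')
    (w : Set (V n) → ℤ) (hw : IsMinkowskiWeight F d w) :
    ∃ c : ℤ, ∀ σ ∈ conesK F d, w σ = c := by
  rcases (conesK F d).eq_empty_or_nonempty with hempty | ⟨σ₀, hσ₀⟩
  · exact ⟨0, by simp [hempty]⟩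
  refine ⟨w σ₀, fun σ hσ => ?_⟩
  have hpath := (hconn σ hσ σ₀ hσ₀).lift w fun a b ⟨ha, hb, hab⟩ =>
    hw.eq_of_adjacent hF.1.rat hnormal ha hb hab
  rwa [Relation.reflTransGen_eq_self] at hpath
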